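/- arXiv:1605.01869 — 6 statements merged into one kernel-verified Lean document; each statement's English description precedes it below -/
import Mathlib

section
/- Let a ∈ F_2^s, let v_1, v_2, v_3 ∈ F_2^s have pairwise disjoint supports, and let X ⊆ F_2^s be a finite set such that each of a+v_1, a+v_2, a+v_3 can be written as a sum of elements of X indexed by pairwise disjoint subsets T_1, T_2, T_3 of X. Then a lies in the F_2-linear span of X^2 = { xy : x,y ∈ X, x ≠ y }, where xy denotes the componentwise product. -/
open Function Submodule

/-! Over `𝔽₂` every vector is idempotent, and for idempotent `a` in characteristic two with
`vᵢ vⱼ = 0` for `i ≠ j` one has `a = ∑_{i<j} (a + vᵢ)(a + vⱼ)`. Each factor `a + vᵢ` is the sum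
over `Tᵢ`, and the `Tᵢ` are pairwise disjoint, so each product expands into products `x y` of
distinct elements of `X`. -/

lemma mul_eq_zero_of_disjoint_support {ι M₀ : Type*} [MulZeroClass M₀] {f g : ι → M₀}
    (h : Disjoint (support f) (support g)) : f * g = 0 := by
  funext i
  by_contra hfg
  exact Set.disjoint_left.mp h (support_mul_subset_left f g hfg) (support_mul_subset_right f g hfg)

lemma IsIdempotentElem.eq_add_mul_add_of_mul_eq_zero {R : Type*} [CommRing R] (two : (2 : R) = 0)
    {a b c d : R} (ha : IsIdempotentElem a) (hbc : b * c = 0) (hbd : b * d = 0) (hcd : c * d = 0) :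
    a = (a + b) * (a + c) + (a + b) * (a + d) + (a + c) * (a + d) := by
  linear_combination -3 * ha.eq - hbc - hbd - hcd - (a + a * (b + c + d)) * two

lemma sum_mul_sum_mem_span_of_disjoint {R A : Type*} [Semiring R] [NonUnitalNonAssocSemiring A]
    [Module R A] {X T T' : Finset A} (hT : T ⊆ X) (hT' : T' ⊆ X) (hd : Disjoint T T') :
    (∑ x ∈ T, x) * (∑ y ∈ T', y) ∈
      span R {z : A | ∃ x ∈ X, ∃ y ∈ X, x ≠ y ∧ z = x * y} := by
  rw [Finset.sum_mul_sum]
  refine sum_mem fun x hx => sum_mem fun y hy => subset_span ?_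
  exact ⟨x, hT hx, y, hT' hy, fun hxy => Finset.disjoint_left.mp hd hx (hxy ▸ hy), rfl⟩

/-- If `a + vₘ` is a sum of elements of `X` over pairwise disjoint subsets
`T₁,T₂,T₃` of `X`, and the `vₘ` have pairwise disjoint supports, then `a`
lies in the span of `X² = {xy : x ≠ y ∈ X}`. -/
theorem stmt_4 (s : ℕ) (a v₁ v₂ v₃ : Fin s → ZMod 2)
    (h12 : Disjoint (Function.support v₁) (Function.support v₂))
    (h13 : Disjoint (Function.support v₁) (Function.support v₃))
    (h23 : Disjoint (Function.support v₂) (Function.support v₃))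
    (X : Finset (Fin s → ZMod 2)) (T₁ T₂ T₃ : Finset (Fin s → ZMod 2))
    (hT₁ : T₁ ⊆ X) (hT₂ : T₂ ⊆ X) (hT₃ : T₃ ⊆ X)
    (hd12 : Disjoint T₁ T₂) (hd13 : Disjoint T₁ T₃) (hd23 : Disjoint T₂ T₃)
    (h1 : a + v₁ = ∑ x ∈ T₁, x) (h2 : a + v₂ = ∑ x ∈ T₂, x)
    (h3 : a + v₃ = ∑ x ∈ T₃, x) :
    a ∈ Submodule.span (ZMod 2)
      {z : Fin s → ZMod 2 | ∃ x ∈ X, ∃ y ∈ X, x ≠ y ∧ z = x * y} := by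
  have ha : IsIdempotentElem a := funext fun i => by
    simpa [sq] using ZMod.pow_card (p := 2) (a i)
  rw [ha.eq_add_mul_add_of_mul_eq_zero (funext fun _ => rfl) (mul_eq_zero_of_disjoint_support h12)
    (mul_eq_zero_of_disjoint_support h13) (mul_eq_zero_of_disjoint_support h23), h1, h2, h3]
  exact add_mem (add_mem (sum_mul_sum_mem_span_of_disjoint hT₁ hT₂ hd12)
    (sum_mul_sum_mem_span_of_disjoint hT₁ hT₃ hd13)) (sum_mul_sum_mem_span_of_disjoint hT₂ hT₃ hd23)
end

section
/- If C is a binary 3-server PIR code of length n and dimension s with redundancy r = n - s, then r(r-1) ≥ 2s. -/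
/-!
Since `G` has rank `s`, some `s` of its columns (an information set `I`) form a basis of `𝔽₂ˢ`, and
in the coordinates of that basis they are the unit vectors. Split each of the three disjoint
recovery sums for `eᵢ` as `dₘ + hₘ`, with `dₘ` the part inside `I`. The `dₘ` are sums of unit
vectors at disjoint positions, so in each coordinate at most one of the three bits `hₘ = eᵢ - dₘ`
differs from that of `eᵢ`. As `x y + x z + y z` is the majority of three bits over `𝔽₂`, this gives
`eᵢ = h₀ h₁ + h₀ h₂ + h₁ h₂` coordinatewise; expanding, every `eᵢ` is a sum of products of two
distinct columns outside `I`, so these `(n - s).choose 2` vectors span `𝔽₂ˢ`.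
-/

open Finset Submodule

section CommRing

variable {R : Type*} [CommRing R]

theorem IsIdempotentElem.majority_sub_eq (h2 : (2 : R) = 0) {a d₀ d₁ d₂ : R}
    (ha : IsIdempotentElem a) (h₀₁ : d₀ * d₁ = 0) (h₀₂ : d₀ * d₂ = 0) (h₁₂ : d₁ * d₂ = 0) :
    (a - d₀) * (a - d₁) + (a - d₀) * (a - d₂) + (a - d₁) * (a - d₂) = a := by
  linear_combination ha.eq + (a * a - a * (d₀ + d₁ + d₂)) * h2 + h₀₁ + h₀₂ + h₁₂

theorem sum_mul_sum_eq_zero_of_disjoint {ι : Type*} (c : ι → R) {I A B : Finset ι}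
    (hI : ∀ j ∈ I, ∀ j' ∈ I, j ≠ j' → c j * c j' = 0) (hA : A ⊆ I) (hB : B ⊆ I)
    (hAB : Disjoint A B) : (∑ j ∈ A, c j) * (∑ j ∈ B, c j) = 0 := by
  rw [sum_mul_sum]
  exact sum_eq_zero fun j hj => sum_eq_zero fun j' hj' =>
    hI j (hA hj) j' (hB hj') (disjoint_iff_ne.mp hAB j hj j' hj')

theorem sum_mul_sum_mem_span_prod_powersetCard_two {ι K : Type*} [Semiring K] [Module K R]
    (c : ι → R) {T A B : Finset ι} (hA : A ⊆ T) (hB : B ⊆ T) (hAB : Disjoint A B) :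
    (∑ j ∈ A, c j) * (∑ j ∈ B, c j) ∈
      span K ((fun t => ∏ j ∈ t, c j) '' ↑(T.powersetCard 2)) := by
  classical
  rw [sum_mul_sum]
  refine sum_mem fun j hj => sum_mem fun j' hj' => subset_span ⟨{j, j'}, ?_, ?_⟩
  all_goals have hne := disjoint_iff_ne.mp hAB j hj j' hj'
  · exact mem_powersetCard.mpr ⟨insert_subset (hA hj) (singleton_subset_iff.mpr (hB hj')),
      card_pair hne⟩
  · exact prod_pair hne

end CommRing

theorem mem_span_prod_powersetCard_two_of_three_disjoint_sums {ι κ : Type*} [Fintype ι]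
    [DecidableEq ι] (c : ι → κ → ZMod 2) {I : Finset ι}
    (hI : ∀ j ∈ I, ∀ j' ∈ I, j ≠ j' → c j * c j' = 0) {x : κ → ZMod 2}
    (S : Fin 3 → Finset ι) (hS : Pairwise (Function.onFun Disjoint S))
    (hsum : ∀ m, ∑ j ∈ S m, c j = x) :
    x ∈ span (ZMod 2) ((fun t => ∏ j ∈ t, c j) '' ↑(Iᶜ.powersetCard 2)) := by
  set h : Fin 3 → κ → ZMod 2 := fun m => ∑ j ∈ S m \ I, c j
  have hx : ∀ m, x - ∑ j ∈ S m ∩ I, c j = h m := fun m => by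
    rw [← hsum m, ← sum_inter_add_sum_sdiff (S m) I, add_sub_cancel_left]
  have hinside : ∀ m m', m ≠ m' → (∑ j ∈ S m ∩ I, c j) * (∑ j ∈ S m' ∩ I, c j) = 0 :=
    fun m m' hne => sum_mul_sum_eq_zero_of_disjoint c hI inter_subset_right inter_subset_right
      ((hS hne).mono inter_subset_left inter_subset_left)
  have hidem : IsIdempotentElem x := by
    ext k; exact (by decide : ∀ a : ZMod 2, a * a = a) (x k)
  have hmaj : h 0 * h 1 + h 0 * h 2 + h 1 * h 2 = x := by
    simp only [← hx]
    exact hidem.majority_sub_eq (by ext; exact rfl) (hinside 0 1 (by decide))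
      (hinside 0 2 (by decide)) (hinside 1 2 (by decide))
  have hout : ∀ m, S m \ I ⊆ Iᶜ := fun m j hj => mem_compl.mpr (mem_sdiff.mp hj).2
  have houtside : ∀ m m', m ≠ m' → h m * h m' ∈
      span (ZMod 2) ((fun t => ∏ j ∈ t, c j) '' ↑(Iᶜ.powersetCard 2)) := fun m m' hne =>
    sum_mul_sum_mem_span_prod_powersetCard_two c (hout m) (hout m')
      ((hS hne).mono sdiff_subset sdiff_subset)
  rw [← hmaj]
  exact add_mem (add_mem (houtside 0 1 (by decide)) (houtside 0 2 (by decide)))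
    (houtside 1 2 (by decide))

theorem finrank_span_image_powersetCard_le {ι M : Type*} (K : Type*) [DivisionRing K]
    [AddCommGroup M] [Module K M] (f : Finset ι → M) (T : Finset ι) (k : ℕ) :
    Module.finrank K (span K (f '' ↑(T.powersetCard k))) ≤ T.card.choose k := by
  classical
  rw [← coe_image]
  exact (finrank_span_finset_le_card _).trans (card_image_le.trans (card_powersetCard k T).le)

theorem exists_finset_linearEquiv_apply_eq_single {ι K V : Type*} [Finite ι] [DecidableEq ι]
    [Field K] [AddCommGroup V] [Module K V] (v : ι → V) (hv : span K (Set.range v) = ⊤) :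
    ∃ (I : Finset ι) (E : V ≃ₗ[K] (I → K)), ∀ j : I, E (v j) = Pi.single j 1 := by
  obtain ⟨b, -, -, hspan, hli⟩ :=
    exists_linearIndepOn_extension (linearIndepOn_empty K v) (Set.empty_subset Set.univ)
  lift b to Finset ι using b.toFinite
  have htop : ⊤ ≤ span K (Set.range fun j : (b : Set ι) => v j) := by
    rw [← hv, ← Set.image_univ, ← Set.image_eq_range, span_le]
    exact hspan
  refine ⟨b, (Module.Basis.mk hli htop).equivFun, fun j => ?_⟩
  ext j'
  rw [← Module.Basis.mk_apply hli htop, Module.Basis.equivFun_self, Pi.single_comm,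
    Pi.single_apply]

theorem two_mul_choose_two (n : ℕ) : 2 * n.choose 2 = n * (n - 1) := by
  rw [Nat.choose_two_right, Nat.mul_div_cancel' (Nat.even_mul_pred_self n).two_dvd]

theorem stmt_8_general (n s : ℕ)
    (G : Matrix (Fin s) (Fin n) (ZMod 2))
    (hrank : G.rank = s)
    (hP : ∀ i : Fin s, ∃ S : Fin 3 → Finset (Fin n),
      Pairwise (Function.onFun Disjoint S) ∧
      ∀ m : Fin 3, ∑ j ∈ S m, (fun i' => G i' j) = Pi.single i 1) :
    2 * s ≤ (n - s) * (n - s - 1) := by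
  have hcols : span (ZMod 2) (Set.range G.col) = ⊤ := eq_top_of_finrank_eq <| by
    rw [← Matrix.rank_eq_finrank_span_cols, hrank, Module.finrank_fin_fun]
  obtain ⟨I, E, hE⟩ := exists_finset_linearEquiv_apply_eq_single G.col hcols
  have hIcard : I.card = s := by simpa using E.finrank_eq.symm
  have hI : ∀ j ∈ I, ∀ j' ∈ I, j ≠ j' → E (G.col j) * E (G.col j') = 0 := by
    intro j hj j' hj' hne
    rw [hE ⟨j, hj⟩, hE ⟨j', hj'⟩, ← Pi.single_mul_left,
      Pi.single_eq_of_ne (fun h => hne (congrArg Subtype.val h)), mul_zero, Pi.single_zero]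
  have hspan : span (ZMod 2) ((fun t => ∏ j ∈ t, E (G.col j)) '' ↑(Iᶜ.powersetCard 2)) = ⊤ := by
    rw [eq_top_iff, ← ((Pi.basisFun (ZMod 2) (Fin s)).map E).span_eq, span_le]
    rintro _ ⟨i, rfl⟩
    obtain ⟨S, hS, hsum⟩ := hP i
    refine mem_span_prod_powersetCard_two_of_three_disjoint_sums _ hI S hS fun m => ?_
    rw [← map_sum, Module.Basis.map_apply, Pi.basisFun_apply]
    exact congrArg E (hsum m)
  have hdim := finrank_span_image_powersetCard_le (ZMod 2) (fun t => ∏ j ∈ t, E (G.col j)) Iᶜ 2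
  rw [hspan, finrank_top, Module.finrank_fintype_fun_eq_card, Fintype.card_coe, hIcard,
    card_compl, Fintype.card_fin, hIcard] at hdim
  rw [← two_mul_choose_two]
  omega

/-- A binary 3-server PIR code of length `n` and dimension `s` has redundancy
`r = n - s` satisfying `r(r-1) ≥ 2s`. -/
theorem stmt_8 (n s : ℕ) (C : Submodule (ZMod 2) (Fin n → ZMod 2))
    (hdim : Module.finrank (ZMod 2) C = s)
    (G : Matrix (Fin s) (Fin n) (ZMod 2))
    (hgen : Submodule.span (ZMod 2) (Set.range G) = C)
    (hrank : G.rank = s)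
    (hP : ∀ i : Fin s, ∃ S : Fin 3 → Finset (Fin n),
      Pairwise (Function.onFun Disjoint S) ∧
      ∀ m : Fin 3, ∑ j ∈ S m, (fun i' => G i' j) = Pi.single i 1) :
    2 * s ≤ (n - s) * (n - s - 1) :=
  stmt_8_general n s G hrank hP
end

section
/- For every k ≥ 3, if C is a binary k-server PIR code of length n and dimension s with redundancy r = n - s, then r(r-1) ≥ 2s; in particular r = Ω(√s). -/
/-!
Let `K` be the kernel of `G` acting on `𝔽₂ⁿ`, so `dim K = r = n - s`. If `S₀, S₁, S₂` are
disjoint recovery sets for `eᵢ` with indicator vectors `x₀, x₁, x₂`, then `x₀ - x₁` and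
`x₀ - x₂` lie in `K` and their coordinatewise product is `x₀`, which `G` maps to `eᵢ`. Hence `G`
maps the span `K * K` of coordinatewise products onto `𝔽₂ˢ`. For a basis `z₁, …, zᵣ` of `K`,
`K * K` is spanned by the products `z_a z_c`, and `z_a z_a = z_a ∈ K` over `𝔽₂`, so the image is
spanned by the `r.choose 2` vectors `G (z_a z_c)` with `a ≠ c`. Thus `s ≤ r (r - 1) / 2`.
-/

open Matrix Module Submodule LinearMap

theorem Matrix.mulVec_indicator_one {m n R : Type*} [Fintype n] [NonAssocSemiring R]
    (G : Matrix m n R) (S : Finset n) :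
    G *ᵥ (S : Set n).indicator 1 = ∑ j ∈ S, G.col j := by
  ext i
  simp only [mulVec, dotProduct, Finset.sum_apply, col_apply]
  rw [← Finset.sum_subset (Finset.subset_univ S)]
  · refine Finset.sum_congr rfl fun j hj => ?_
    simp [Set.indicator_of_mem (Finset.mem_coe.2 hj)]
  · intro j _ hj
    simp [Set.indicator_of_notMem (mt Finset.mem_coe.1 hj)]

section Indicators

variable {ι R : Type*} [CommRing R]

theorem sub_mul_sub_indicator_of_pairwise_disjoint {S : Fin 3 → Set ι}
    (hS : Pairwise (Function.onFun Disjoint S)) :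
    ((S 0).indicator 1 - (S 1).indicator 1) * ((S 0).indicator 1 - (S 2).indicator 1) =
      ((S 0).indicator 1 : ι → R) := by
  have hprod : ∀ {a b : Fin 3}, a ≠ b → ((S a).indicator 1 * (S b).indicator 1 : ι → R) = 0 :=
    fun hab => by rw [← Set.inter_indicator_one, (hS hab).inter_eq, Set.indicator_empty']
  have hsq : ((S 0).indicator 1 * (S 0).indicator 1 : ι → R) = (S 0).indicator 1 := by
    rw [← Set.inter_indicator_one, Set.inter_self]
  rw [sub_mul, mul_sub, mul_sub, hsq, hprod (by decide), hprod (by decide), hprod (by decide)]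
  abel

variable {M : Type*} [AddCommGroup M] [Module R M]

theorem mem_map_ker_mul_ker_of_pairwise_disjoint (f : (ι → R) →ₗ[R] M) {S : Fin 3 → Set ι}
    (hS : Pairwise (Function.onFun Disjoint S)) {y : M} (hy : ∀ m, f ((S m).indicator 1) = y) :
    y ∈ (ker f * ker f).map f := by
  have hker : ∀ m, (S 0).indicator 1 - (S m).indicator 1 ∈ ker f := fun m => by
    rw [mem_ker, map_sub, hy, hy, sub_self]
  refine ⟨_, mul_mem_mul (hker 1) (hker 2), ?_⟩
  rw [sub_mul_sub_indicator_of_pairwise_disjoint hS, hy]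

end Indicators

theorem finrank_map_ker_mul_ker_le {ι M : Type*} [Fintype ι] [AddCommGroup M]
    [Module (ZMod 2) M] (f : (ι → ZMod 2) →ₗ[ZMod 2] M) :
    finrank (ZMod 2) ((ker f * ker f).map f) ≤ (finrank (ZMod 2) (ker f)).choose 2 := by
  classical
  set r := finrank (ZMod 2) (ker f)
  let z : Fin r → ι → ZMod 2 := fun a => finBasis (ZMod 2) (ker f) a
  have hspan : span (ZMod 2) (Set.range z) = ker f := by
    rw [Set.range_comp', span_val_image_eq_iff]
    exact (finBasis (ZMod 2) (ker f)).span_eq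
  let T : Finset M := (Finset.univ.powersetCard 2).image fun t => f (∏ a ∈ t, z a)
  have hle : (ker f * ker f).map f ≤ span (ZMod 2) T := by
    rw [← hspan, span_mul_span, Submodule.map_span, span_le]
    rintro _ ⟨_, ⟨_, ⟨a, rfl⟩, _, ⟨c, rfl⟩, rfl⟩, rfl⟩
    rcases eq_or_ne a c with rfl | hac
    · have hidem : z a * z a = z a := funext fun j => (by decide : ∀ x : ZMod 2, x * x = x) _
      change f (z a * z a) ∈ _
      rw [hidem, (finBasis (ZMod 2) (ker f) a).2]
      exact zero_mem _
    · refine subset_span (Finset.mem_image.mpr ⟨{a, c}, ?_, ?_⟩)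
      · simp [Finset.card_pair hac]
      · rw [Finset.prod_pair hac]
  calc finrank (ZMod 2) ((ker f * ker f).map f)
      ≤ finrank (ZMod 2) (span (ZMod 2) (T : Set M)) := finrank_mono hle
    _ ≤ T.card := finrank_span_finset_le_card T
    _ ≤ (Finset.univ.powersetCard 2 : Finset (Finset (Fin r))).card := Finset.card_image_le
    _ = r.choose 2 := by simp

theorem stmt_9_general (n s k : ℕ) (hk : 3 ≤ k)
    (G : Matrix (Fin s) (Fin n) (ZMod 2))
    (hrank : G.rank = s)
    (hP : ∀ i : Fin s, ∃ S : Fin k → Finset (Fin n),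
      Pairwise (Function.onFun Disjoint S) ∧
      ∀ m : Fin k, ∑ j ∈ S m, (fun i' => G i' j) = Pi.single i 1) :
    2 * s ≤ (n - s) * (n - s - 1) := by
  set f := G.mulVecLin
  have hker : finrank (ZMod 2) (ker f) = n - s := by
    have hrn := f.finrank_range_add_finrank_ker
    rw [← Matrix.rank, hrank, finrank_fin_fun] at hrn
    omega
  have htop : (ker f * ker f).map f = ⊤ := by
    rw [eq_top_iff, ← (Pi.basisFun (ZMod 2) (Fin s)).span_eq, span_le]
    rintro _ ⟨i, rfl⟩
    obtain ⟨S, hdisj, hsum⟩ := hP i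
    refine mem_map_ker_mul_ker_of_pairwise_disjoint f (S := fun m => S (Fin.castLE hk m))
      (fun a b hab => Finset.disjoint_coe.2 (hdisj ((Fin.castLE_injective hk).ne hab)))
      fun m => ?_
    rw [Pi.basisFun_apply, ← hsum]
    exact G.mulVec_indicator_one _
  have hbound := finrank_map_ker_mul_ker_le f
  rw [htop, finrank_top, finrank_fin_fun, hker, Nat.choose_two_right] at hbound
  have heven := Nat.div_mul_cancel (Nat.even_mul_pred_self (n - s)).two_dvd
  omega

/-- For every `k ≥ 3`, a binary `k`-server PIR code of length `n` and dimension
`s` has redundancy `r = n - s` satisfying `r(r-1) ≥ 2s`. -/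
theorem stmt_9 (n s k : ℕ) (hk : 3 ≤ k) (C : Submodule (ZMod 2) (Fin n → ZMod 2))
    (hdim : Module.finrank (ZMod 2) C = s)
    (G : Matrix (Fin s) (Fin n) (ZMod 2))
    (hgen : Submodule.span (ZMod 2) (Set.range G) = C)
    (hrank : G.rank = s)
    (hP : ∀ i : Fin s, ∃ S : Fin k → Finset (Fin n),
      Pairwise (Function.onFun Disjoint S) ∧
      ∀ m : Fin k, ∑ j ∈ S m, (fun i' => G i' j) = Pi.single i 1) :
    2 * s ≤ (n - s) * (n - s - 1) :=
  stmt_9_general n s k hk G hrank hP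
end

section
/- Let r be an integer with r(r-1)/2 ≥ s, and let P be an s×r binary matrix whose rows are s distinct vectors of Hamming weight 2. Then the s×(s+r) matrix G = [I_s | P] has property P_3; that is, for every i ∈ [s] there exist 3 pairwise disjoint sets of columns of G each summing to e_i over GF(2). -/
/-!
Say row `i` of `P` is supported on the columns `a ≠ b`. The first set is the unit column `e_i`.
For `c ∈ {a, b}`, column `c` of `P` plus the unit columns `e_k` of all rows `k ≠ i` with
`P k c = 1` sums to `e_i` over GF(2). These two sets are disjoint: a row `k ≠ i` meeting both
`a` and `b` would have the same weight-2 support as row `i`, hence equal it.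
-/

open Finset Function

theorem pairwise_disjoint_three {α : Type*} [PartialOrder α] [OrderBot α] {a b c : α}
    (hab : Disjoint a b) (hac : Disjoint a c) (hbc : Disjoint b c) :
    Pairwise (Disjoint on ![a, b, c]) := by
  intro m n hmn
  fin_cases m <;> fin_cases n <;> simp_all [onFun, hab.symm, hac.symm, hbc.symm]

namespace ZMod

variable {ι : Type*} [Fintype ι] [DecidableEq ι]

theorem eq_sum_pi_single_filter_ne_zero (v : ι → ZMod 2) :
    v = ∑ k ∈ univ.filter (v · ≠ 0), Pi.single k 1 := by
  ext i
  rw [Finset.sum_apply, Finset.sum_pi_single]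
  by_cases hi : v i = 0
  · simp [hi]
  · rw [if_pos ((mem_filter_univ i).mpr hi)]
    exact Fin.eq_one_of_ne_zero (v i) hi

theorem add_sum_pi_single_filter_ne_zero_erase {v : ι → ZMod 2} {i : ι} (hi : v i ≠ 0) :
    v + ∑ k ∈ (univ.filter (v · ≠ 0)).erase i, Pi.single k 1 = Pi.single i 1 := by
  have hmem : i ∈ univ.filter (v · ≠ 0) := by simpa using hi
  conv_lhs => arg 1; rw [eq_sum_pi_single_filter_ne_zero v, ← add_sum_erase _ _ hmem]
  rw [add_assoc, ZModModule.add_self, add_zero]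

theorem eq_of_filter_ne_zero_eq {v w : ι → ZMod 2}
    (h : univ.filter (v · ≠ 0) = univ.filter (w · ≠ 0)) : v = w := by
  rw [eq_sum_pi_single_filter_ne_zero v, eq_sum_pi_single_filter_ne_zero w, h]

theorem filter_ne_zero_eq_pair {v : ι → ZMod 2} (hv : #(univ.filter (v · ≠ 0)) = 2)
    {a b : ι} (hab : a ≠ b) (ha : v a ≠ 0) (hb : v b ≠ 0) :
    univ.filter (v · ≠ 0) = {a, b} :=
  (eq_of_subset_of_card_le (by simp [insert_subset_iff, ha, hb])
    (by rw [hv, card_pair hab])).symm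

end ZMod

namespace Matrix

variable {ι κ : Type*} [DecidableEq ι]

theorem fromCols_one_apply_inl {α : Type*} [Zero α] [One α] (P : Matrix ι κ α) (j : ι) :
    (fun k => fromCols 1 P k (Sum.inl j)) = Pi.single j 1 := by
  ext k
  simp [Pi.single_apply, one_apply]

/-- Column `c` of `P` (index `inr c`) together with the unit columns `e_k` (indices `inl k`) of
the rows `k ≠ i` meeting it. -/
def unitCompletion [Fintype ι] (P : Matrix ι κ (ZMod 2)) (i : ι) (c : κ) :
    Finset (ι ⊕ κ) :=
  ((univ.filter (P · c ≠ 0)).erase i).disjSum {c}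

theorem sum_unitCompletion [Fintype ι] {P : Matrix ι κ (ZMod 2)} {i : ι} {c : κ}
    (hc : P i c ≠ 0) :
    ∑ x ∈ unitCompletion P i c, (fun k => fromCols 1 P k x) = Pi.single i 1 := by
  rw [unitCompletion, sum_disjSum, sum_singleton, add_comm]
  simp only [fromCols_one_apply_inl, fromCols_apply_inr]
  exact ZMod.add_sum_pi_single_filter_ne_zero_erase (v := fun k => P k c) hc

theorem inl_notMem_unitCompletion [Fintype ι] (P : Matrix ι κ (ZMod 2)) (i : ι) (c : κ) :
    Sum.inl i ∉ unitCompletion P i c := by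
  simp [unitCompletion]

theorem disjoint_unitCompletion [Fintype ι] [Fintype κ] [DecidableEq κ]
    {P : Matrix ι κ (ZMod 2)} (hinj : Injective P)
    (hwt : ∀ k, #(univ.filter (P k · ≠ 0)) = 2) {i : ι} {a b : κ} (hab : a ≠ b)
    (ha : P i a ≠ 0) (hb : P i b ≠ 0) :
    Disjoint (unitCompletion P i a) (unitCompletion P i b) := by
  simp only [unitCompletion, disjoint_left, mem_disjSum, mem_erase, mem_filter_univ,
    mem_singleton]
  rintro _ (⟨k, ⟨hki, hka⟩, rfl⟩ | ⟨_, rfl, rfl⟩) (⟨_, ⟨_, hkb⟩, hk⟩ | ⟨_, rfl, h⟩)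
  · cases hk
    refine hki (hinj (ZMod.eq_of_filter_ne_zero_eq ?_))
    rw [ZMod.filter_ne_zero_eq_pair (hwt k) hab hka hkb,
      ZMod.filter_ne_zero_eq_pair (hwt i) hab ha hb]
  · cases h
  · cases hk
  · exact hab (Sum.inr_injective h.symm)

theorem exists_three_disjoint_sum_fromCols_one_eq_single [Fintype ι] [Fintype κ]
    [DecidableEq κ] {P : Matrix ι κ (ZMod 2)} (hinj : Injective P)
    (hwt : ∀ k, #(univ.filter (P k · ≠ 0)) = 2) (i : ι) :
    ∃ S : Fin 3 → Finset (ι ⊕ κ), Pairwise (Disjoint on S) ∧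
      ∀ m, ∑ x ∈ S m, (fun k => fromCols 1 P k x) = Pi.single i 1 := by
  obtain ⟨a, b, hab, hsupp⟩ := card_eq_two.mp (hwt i)
  have hmem : ∀ c ∈ ({a, b} : Finset κ), P i c ≠ 0 := fun c hc => by
    rw [← hsupp] at hc
    simpa using hc
  have ha := hmem a (by simp)
  have hb := hmem b (by simp)
  refine ⟨![{Sum.inl i}, unitCompletion P i a, unitCompletion P i b],
    pairwise_disjoint_three
      (disjoint_singleton_left.mpr (inl_notMem_unitCompletion P i a))
      (disjoint_singleton_left.mpr (inl_notMem_unitCompletion P i b))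
      (disjoint_unitCompletion hinj hwt hab ha hb), fun m => ?_⟩
  fin_cases m
  · simpa using fromCols_one_apply_inl P i
  · exact sum_unitCompletion ha
  · exact sum_unitCompletion hb

end Matrix

theorem stmt_11_general (s r : ℕ)
    (P : Matrix (Fin s) (Fin r) (ZMod 2))
    (hinj : Function.Injective fun i => P i)
    (hwt : ∀ i : Fin s, (Finset.univ.filter fun j => P i j ≠ 0).card = 2)
    (G : Matrix (Fin s) (Fin (s + r)) (ZMod 2))
    (hG : ∀ i : Fin s, G i = Fin.append (Pi.single i 1) (P i)) :
    ∀ i : Fin s, ∃ S : Fin 3 → Finset (Fin (s + r)),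
      Pairwise (Function.onFun Disjoint S) ∧
      ∀ m : Fin 3, ∑ j ∈ S m, (fun i' => G i' j) = Pi.single i 1 := by
  intro i
  have hcol : ∀ x, (fun k => G k (finSumFinEquiv x)) = fun k => Matrix.fromCols 1 P k x := by
    rintro (j | c) <;> ext k <;> simp [hG k, Pi.single_apply, Matrix.one_apply, eq_comm]
  obtain ⟨S, hdisj, hsum⟩ := Matrix.exists_three_disjoint_sum_fromCols_one_eq_single hinj hwt i
  refine ⟨fun m => (S m).map finSumFinEquiv.toEmbedding,
    fun m n hmn => (disjoint_map _).mpr (hdisj hmn), fun m => ?_⟩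
  rw [sum_map]
  simpa only [Equiv.coe_toEmbedding, hcol] using hsum m

/-- If `P` is an `s×r` binary matrix with distinct rows of Hamming weight 2
(possible when `r(r-1)/2 ≥ s`), then `G = [I_s | P]` has property `P_3`. -/
theorem stmt_11 (s r : ℕ) (hr : s ≤ r * (r - 1) / 2)
    (P : Matrix (Fin s) (Fin r) (ZMod 2))
    (hinj : Function.Injective fun i => P i)
    (hwt : ∀ i : Fin s, (Finset.univ.filter fun j => P i j ≠ 0).card = 2)
    (G : Matrix (Fin s) (Fin (s + r)) (ZMod 2))
    (hG : ∀ i : Fin s, G i = Fin.append (Pi.single i 1) (P i)) :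
    ∀ i : Fin s, ∃ S : Fin 3 → Finset (Fin (s + r)),
      Pairwise (Function.onFun Disjoint S) ∧
      ∀ m : Fin 3, ∑ j ∈ S m, (fun i' => G i' j) = Pi.single i 1 :=
  stmt_11_general s r P hinj hwt G hG
end

section
/- For every s ≥ 1, the minimum redundancy of a binary 3-server PIR code of dimension s equals the smallest integer r such that r(r-1) ≥ 2s, i.e., ρ(s,3) = ⌈√(2s + 1/4) + 1/2⌉. -/
/-!
Property `P_3` at row `i` amounts to two vectors `u, v ∈ ker G` with `G (u * v) = e_i` (pointwise
product): recovery sets `S₀, S₁, S₂` give the indicators of `S₀ ∪ S₁` and `S₀ ∪ S₂`, and conversely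
the supports `U`, `V` give the recovery sets `U ∩ V`, `U \ V`, `V \ U`. Over `GF(2)` every vector
is idempotent, so `(u, v) ↦ G (u * v)` is an alternating bilinear map on `ker G`, which has
dimension `r` because `G` is onto. Its image contains every `e_i` and spans a space of dimension at
most `r.choose 2`, whence `2 s ≤ r (r - 1)`. Conversely, if the rows of `P` are the indicators of
`s` distinct pairs, then for the row `i` with pair `{a, b}` of `G = [I | P]` the vectors
`u = (P e_a, e_a)` and `v = (P e_b, e_b)` lie in `ker G` and `G (u * v) = P e_a * P e_b = e_i`.
-/

/-- Property `P_k` for an `s×n` binary matrix. -/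
def HasPropertyP (s n k : ℕ) (G : Matrix (Fin s) (Fin n) (ZMod 2)) : Prop :=
  ∀ i : Fin s, ∃ S : Fin k → Finset (Fin n),
    Pairwise (Function.onFun Disjoint S) ∧
    ∀ m : Fin k, ∑ j ∈ S m, (fun i' => G i' j) = Pi.single i 1

/-- Minimal redundancy of `k`-server PIR codes of dimension `s`. -/
noncomputable def rho (s k : ℕ) : ℕ :=
  sInf {r | ∃ G : Matrix (Fin s) (Fin (s + r)) (ZMod 2), HasPropertyP s (s + r) k G}

open Matrix Module Finset

lemma eq_indicator_one_filter_eq_one {n : Type*} [Fintype n] (u : n → ZMod 2) :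
    u = ((univ.filter (u · = 1) : Finset n) : Set n).indicator 1 := by
  ext j
  by_cases h : u j = 1
  · simp [h]
  · simpa [h] using (show ∀ x : ZMod 2, x ≠ 1 → x = 0 by decide) _ h

lemma Submodule.eq_top_of_forall_single_one_mem {m R : Type*} [Finite m] [DecidableEq m]
    [Semiring R] {p : Submodule R (m → R)} (h : ∀ i, Pi.single i 1 ∈ p) : p = ⊤ := by
  rw [eq_top_iff, ← (Pi.basisFun R m).span_eq, Submodule.span_le]
  rintro _ ⟨i, rfl⟩
  simpa using h i

namespace Matrix

variable {m n : Type*} [Fintype n]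

lemma mulVec_indicator_one_s12 (G : Matrix m n (ZMod 2)) (S : Finset n) :
    G *ᵥ (S : Set n).indicator 1 = ∑ j ∈ S, fun i => G i j := by
  classical
  ext i
  simp [mulVec, dotProduct, Set.indicator_apply, Finset.sum_apply, Finset.sum_ite_mem]

variable [DecidableEq m]

def HasKerProducts (G : Matrix m n (ZMod 2)) : Prop :=
  ∀ i, ∃ u v : n → ZMod 2, G *ᵥ u = 0 ∧ G *ᵥ v = 0 ∧ G *ᵥ (u * v) = Pi.single i 1

namespace HasKerProducts

variable {G : Matrix m n (ZMod 2)} (hG : G.HasKerProducts)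
include hG

lemma submatrix_equiv {n' : Type*} [Fintype n'] (e : n' ≃ n) :
    (G.submatrix id e).HasKerProducts := by
  intro i
  obtain ⟨u, v, hu, hv, huv⟩ := hG i
  refine ⟨u ∘ e, v ∘ e, ?_, ?_, ?_⟩ <;>
    simpa [submatrix_mulVec_equiv, Function.comp_assoc, ← Pi.mul_comp]

variable [Fintype m]

lemma finrank_ker_add_card :
    finrank (ZMod 2) (LinearMap.ker G.mulVecLin) + Fintype.card m = Fintype.card n := by
  have hrange : LinearMap.range G.mulVecLin = ⊤ :=
    Submodule.eq_top_of_forall_single_one_mem fun i =>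
      let ⟨u, v, _, _, huv⟩ := hG i
      ⟨u * v, huv⟩
  have := LinearMap.finrank_range_add_finrank_ker G.mulVecLin
  rw [hrange, finrank_top, finrank_fintype_fun_eq_card, finrank_fintype_fun_eq_card] at this
  omega

lemma card_le_choose :
    Fintype.card m ≤ (finrank (ZMod 2) (LinearMap.ker G.mulVecLin)).choose 2 := by
  set K := LinearMap.ker G.mulVecLin
  let d := Module.finBasis (ZMod 2) K
  let β : K →ₗ[ZMod 2] K →ₗ[ZMod 2] m → ZMod 2 :=
    ((LinearMap.mul (ZMod 2) (n → ZMod 2)).compr₂ G.mulVecLin).compl₁₂ K.subtype K.subtype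
  have hβ_apply (x y : K) : β x y = G *ᵥ ((x : n → ZMod 2) * y) := rfl
  let w : {z : Sym2 (Fin (finrank (ZMod 2) K)) // ¬ z.IsDiag} → m → ZMod 2 := fun z =>
    Sym2.lift ⟨fun a b => β (d a) (d b), fun a b => by simp only [hβ_apply, mul_comm]⟩ z
  set W := Submodule.span (ZMod 2) (Set.range w)
  have hβW (x y : K) : β x y ∈ W := by
    suffices β.compr₂ W.mkQ = 0 by
      simpa [Submodule.Quotient.mk_eq_zero] using LinearMap.congr_fun₂ this x y
    refine LinearMap.ext_basis d d fun a b => ?_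
    rw [LinearMap.compr₂_apply, LinearMap.zero_apply, LinearMap.zero_apply,
      Submodule.mkQ_apply, Submodule.Quotient.mk_eq_zero]
    by_cases hab : a = b
    · subst hab
      have hidem : ((d a : K) : n → ZMod 2) * d a = d a := by
        ext j; exact (show ∀ t : ZMod 2, t * t = t by decide) _
      have hker : G *ᵥ (d a : n → ZMod 2) = 0 := LinearMap.mem_ker.1 (d a).2
      rw [hβ_apply, hidem, hker]
      exact W.zero_mem
    · exact Submodule.subset_span ⟨⟨s(a, b), by simpa using hab⟩, rfl⟩
  have hW : W = ⊤ := Submodule.eq_top_of_forall_single_one_mem fun i => by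
    obtain ⟨u, v, hu, hv, huv⟩ := hG i
    exact huv ▸ hβW ⟨u, hu⟩ ⟨v, hv⟩
  calc Fintype.card m = finrank (ZMod 2) W := by
        rw [hW, finrank_top, finrank_fintype_fun_eq_card]
    _ ≤ _ := finrank_range_le_card w
    _ = _ := by rw [Sym2.card_subtype_not_diag, Fintype.card_fin]

end HasKerProducts

variable {ι : Type*} [Fintype ι]

lemma fromCols_one_mulVec_sumElim {R : Type*} [Semiring R] [Fintype m] (P : Matrix m ι R)
    (x : m → R) (y : ι → R) : fromCols 1 P *ᵥ Sum.elim x y = x + P *ᵥ y := by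
  simp [fromCols_mulVec]

variable [Fintype m] [DecidableEq ι]

lemma fromCols_one_mulVec_sumElim_col_single (P : Matrix m ι (ZMod 2)) (c : ι) :
    fromCols 1 P *ᵥ Sum.elim (P.col c) (Pi.single c 1) = 0 := by
  rw [fromCols_one_mulVec_sumElim, mulVec_single_one, ZModModule.add_self]

def pairIncidence (f : m → Sym2 ι) : Matrix m ι (ZMod 2) :=
  of fun j c => if c ∈ f j then 1 else 0

lemma hasKerProducts_fromCols_one_pairIncidence (f : m ↪ {z : Sym2 ι // ¬ z.IsDiag}) :
    (fromCols (1 : Matrix m m (ZMod 2)) (pairIncidence fun j => (f j : Sym2 ι))).HasKerProducts := by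
  intro i
  obtain ⟨a, b, hfi⟩ : ∃ a b, (f i : Sym2 ι) = s(a, b) := Sym2.exists.1 ⟨_, rfl⟩
  have hab : a ≠ b := by simpa [hfi] using (f i).2
  set P := pairIncidence fun j => (f j : Sym2 ι)
  refine ⟨Sum.elim (P.col a) (Pi.single a 1), Sum.elim (P.col b) (Pi.single b 1),
    fromCols_one_mulVec_sumElim_col_single P a, fromCols_one_mulVec_sumElim_col_single P b, ?_⟩
  have hprod : Sum.elim (P.col a) (Pi.single a 1) * Sum.elim (P.col b) (Pi.single b 1) =
      Sum.elim (Pi.single i 1) 0 := by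
    ext (j | c)
    · simp only [Pi.mul_apply, Sum.elim_inl, col_apply, P, pairIncidence, of_apply, Pi.single_apply]
      rw [ite_zero_mul_ite_zero, one_mul]
      congr 1
      rw [Sym2.mem_and_mem_iff hab, ← hfi, Subtype.coe_inj, f.apply_eq_iff_eq]
    · by_cases hc : c = a <;> simp [Pi.single_apply, hc, hab]
  rw [hprod, fromCols_one_mulVec_sumElim, mulVec_zero, add_zero]

end Matrix

lemma hasPropertyP_three_iff {s n : ℕ} (G : Matrix (Fin s) (Fin n) (ZMod 2)) :
    HasPropertyP s n 3 G ↔ G.HasKerProducts := by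
  refine forall_congr' fun i => ⟨?_, ?_⟩
  · rintro ⟨S, hS, hsum⟩
    have h01 : Disjoint (S 0) (S 1) := hS (by decide)
    have h02 : Disjoint (S 0) (S 2) := hS (by decide)
    have h12 : Disjoint (S 1) (S 2) := hS (by decide)
    refine ⟨((S 0 ∪ S 1 : Finset (Fin n)) : Set (Fin n)).indicator 1,
      ((S 0 ∪ S 2 : Finset (Fin n)) : Set (Fin n)).indicator 1, ?_, ?_, ?_⟩
    · rw [mulVec_indicator_one_s12, sum_union h01, hsum, hsum, ZModModule.add_self]
    · rw [mulVec_indicator_one_s12, sum_union h02, hsum, hsum, ZModModule.add_self]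
    · rw [← Set.inter_indicator_one, ← coe_inter, ← union_inter_distrib_left,
        disjoint_iff_inter_eq_empty.1 h12, union_empty, mulVec_indicator_one_s12, hsum]
  · rintro ⟨u, v, hu, hv, huv⟩
    set U := univ.filter (u · = 1)
    set V := univ.filter (v · = 1)
    rw [eq_indicator_one_filter_eq_one u, mulVec_indicator_one_s12] at hu
    rw [eq_indicator_one_filter_eq_one v, mulVec_indicator_one_s12] at hv
    rw [eq_indicator_one_filter_eq_one u, eq_indicator_one_filter_eq_one v,
      ← Set.inter_indicator_one, ← coe_inter, mulVec_indicator_one_s12] at huv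
    refine ⟨![U ∩ V, U \ V, V \ U], ?_, ?_⟩
    · intro a b hab
      fin_cases a <;> fin_cases b <;> simp_all [Function.onFun, disjoint_left]
    · intro k
      fin_cases k
      · exact huv
      · have := sum_inter_add_sum_sdiff U V fun j i => G i j
        rwa [hu, huv, ← ZModModule.sub_eq_add, sub_eq_zero, eq_comm] at this
      · have := sum_inter_add_sum_sdiff V U fun j i => G i j
        rwa [hv, inter_comm, huv, ← ZModModule.sub_eq_add, sub_eq_zero, eq_comm] at this

lemma exists_hasPropertyP_three_iff (s r : ℕ) :
    (∃ G : Matrix (Fin s) (Fin (s + r)) (ZMod 2), HasPropertyP s (s + r) 3 G) ↔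
      2 * s ≤ r * (r - 1) := by
  simp_rw [hasPropertyP_three_iff]
  constructor
  · rintro ⟨G, hG⟩
    have hrank := hG.finrank_ker_add_card
    have hcard := hG.card_le_choose
    simp only [Fintype.card_fin] at hrank hcard
    rw [show finrank (ZMod 2) (LinearMap.ker G.mulVecLin) = r by omega,
      Nat.choose_two_right] at hcard
    omega
  · intro h
    have hcard : Fintype.card (Fin s) ≤ Fintype.card {z : Sym2 (Fin r) // ¬ z.IsDiag} := by
      rw [Sym2.card_subtype_not_diag, Fintype.card_fin, Fintype.card_fin, Nat.choose_two_right]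
      omega
    obtain ⟨f⟩ := Function.Embedding.nonempty_of_card_le hcard
    exact ⟨_, (hasKerProducts_fromCols_one_pairIncidence f).submatrix_equiv finSumFinEquiv.symm⟩

lemma two_mul_le_mul_sub_one_iff_ceil_le {s : ℕ} (hs : 1 ≤ s) (r : ℕ) :
    2 * s ≤ r * (r - 1) ↔ ⌈Real.sqrt (2 * s + 1 / 4) + 1 / 2⌉ ≤ (r : ℤ) := by
  rw [Int.ceil_le, Int.cast_natCast, ← le_sub_iff_add_le, Real.sqrt_le_iff]
  rcases r with _ | k
  · norm_num
    omega
  · rw [Nat.add_sub_cancel, Nat.cast_succ]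
    constructor
    · intro h
      have h' : (2 * s : ℝ) ≤ (k + 1) * k := by exact_mod_cast h
      constructor <;> nlinarith
    · rintro ⟨-, h⟩
      have h' : (2 * s : ℝ) ≤ (k + 1) * k := by nlinarith
      exact_mod_cast h'

lemma Nat.sInf_setOf_le_natCast (c : ℤ) : sInf {r : ℕ | c ≤ r} = c.toNat :=
  le_antisymm (Nat.sInf_le (Int.self_le_toNat c))
    (le_csInf ⟨_, Int.self_le_toNat c⟩ fun _ hr => Int.toNat_le.2 hr)

/-- `ρ(s,3)` equals the smallest `r` with `r(r-1) ≥ 2s`, which is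
`⌈√(2s + 1/4) + 1/2⌉`. -/
theorem stmt_12 (s : ℕ) (hs : 1 ≤ s) :
    rho s 3 = sInf {r : ℕ | 2 * s ≤ r * (r - 1)} ∧
    (rho s 3 : ℤ) = ⌈Real.sqrt (2 * s + 1 / 4) + 1 / 2⌉ := by
  have hrho : rho s 3 = sInf {r : ℕ | 2 * s ≤ r * (r - 1)} :=
    congrArg sInf (Set.ext fun r => exists_hasPropertyP_three_iff s r)
  refine ⟨hrho, ?_⟩
  have hceil : {r : ℕ | 2 * s ≤ r * (r - 1)} =
      {r : ℕ | ⌈Real.sqrt (2 * s + 1 / 4) + 1 / 2⌉ ≤ (r : ℤ)} :=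
    Set.ext (two_mul_le_mul_sub_one_iff_ceil_le hs)
  rw [hrho, hceil, Nat.sInf_setOf_le_natCast, Int.toNat_of_nonneg (Int.ceil_nonneg (by positivity))]
end

section
/- Every binary 3-server PIR code of dimension s has length n ≥ s + ⌈√(2s + 1/4) + 1/2⌉; hence the rate of a 3-server PIR code of dimension s is at most s/(s + √(2s)) and tends to 1 no faster than 1 - Θ(1/√s). -/
/-!
Let `K = ker G ⊆ 𝔽₂ⁿ`, of dimension `n - s`. Since `a * a = a` coordinatewise over `𝔽₂`, the map
`(a, b) ↦ G (a * b)` is alternating on `K`, hence factors through `⋀² K`. Property `P₃` puts every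
unit vector `eᵢ` in its image: if `a, b, c` are the indicator vectors of three disjoint column sets
each summing to `eᵢ`, then `a + b, a + c ∈ K` and `(a + b) * (a + c) = a`. So
`s ≤ dim ⋀² K = (n - s).choose 2`, and the length bound is the arithmetic of `r (r - 1) ≥ 2 s`.
-/

open Module Submodule Matrix

theorem finrank_le_choose_of_span_range_eq_top {K M N : Type*} [Field K]
    [AddCommGroup M] [Module K M] [FiniteDimensional K M] [AddCommGroup N] [Module K N]
    {k : ℕ} (f : M [⋀^Fin k]→ₗ[K] N) (hf : span K (Set.range f) = ⊤) :
    finrank K N ≤ (finrank K M).choose k := by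
  set F := exteriorPower.alternatingMapLinearEquiv f
  have hF : LinearMap.range F = ⊤ := by
    refine eq_top_iff.2 (hf ▸ span_le.2 ?_)
    rintro _ ⟨a, rfl⟩
    exact ⟨_, exteriorPower.alternatingMapLinearEquiv_apply_ιMulti f a⟩
  calc finrank K N = finrank K (LinearMap.range F) := by rw [hF, finrank_top]
    _ ≤ finrank K (⋀[K]^k M) := LinearMap.finrank_range_le F
    _ = (finrank K M).choose k := exteriorPower.finrank_eq K k

theorem Matrix.rank_add_finrank_ker {K m n : Type*} [Field K] [Fintype n] (A : Matrix m n K) :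
    A.rank + finrank K (LinearMap.ker A.mulVecLin) = Fintype.card n := by
  rw [Matrix.rank, LinearMap.finrank_range_add_finrank_ker, finrank_fintype_fun_eq_card]

theorem Matrix.mulVec_ite_mem {R m n : Type*} [NonAssocSemiring R] [Fintype n] [DecidableEq n]
    (A : Matrix m n R) (S : Finset n) :
    A *ᵥ (fun j => if j ∈ S then 1 else 0) = ∑ j ∈ S, A.col j := by
  ext i
  simp [Matrix.mulVec, dotProduct, Finset.sum_apply]

theorem ite_mem_mul_ite_mem_of_disjoint {R ι : Type*} [MulZeroOneClass R] [DecidableEq ι]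
    {S T : Finset ι} (h : Disjoint S T) :
    ((fun j => if j ∈ S then 1 else 0) * fun j => if j ∈ T then 1 else 0 : ι → R) = 0 := by
  ext j
  by_cases hj : j ∈ S
  · simp [hj, Finset.disjoint_left.1 h hj]
  · simp [hj]

section Schur

variable {ι N : Type*} [AddCommGroup N] [Module (ZMod 2) N]

theorem Pi.zmod_two_mul_self (a : ι → ZMod 2) : a * a = a := by
  funext j
  exact (by decide : ∀ x : ZMod 2, x * x = x) (a j)

def schurAlternating (φ : (ι → ZMod 2) →ₗ[ZMod 2] N) :
    LinearMap.ker φ [⋀^Fin 2]→ₗ[ZMod 2] N where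
  toMultilinearMap :=
    (φ.compMultilinearMap (MultilinearMap.mkPiAlgebra (ZMod 2) (Fin 2) _)).compLinearMap
      fun _ => (LinearMap.ker φ).subtype
  map_eq_zero_of_eq' v i j hv hij := by
    have h01 : v 0 = v 1 := by
      fin_cases i <;> fin_cases j <;> simp_all
    change φ (∏ k, (v k : ι → ZMod 2)) = 0
    rw [Fin.prod_univ_two, h01, Pi.zmod_two_mul_self]
    exact (v 1).2

theorem schurAlternating_apply (φ : (ι → ZMod 2) →ₗ[ZMod 2] N) (v : Fin 2 → LinearMap.ker φ) :
    schurAlternating φ v = φ (v 0 * v 1) := by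
  simp [schurAlternating, MultilinearMap.mkPiAlgebra_apply, Fin.prod_univ_two]

theorem mem_range_schurAlternating_of_mul_eq_zero (φ : (ι → ZMod 2) →ₗ[ZMod 2] N)
    {a b c : ι → ZMod 2} (hab : a * b = 0) (hac : a * c = 0) (hbc : b * c = 0) {x : N}
    (ha : φ a = x) (hb : φ b = x) (hc : φ c = x) : x ∈ Set.range (schurAlternating φ) := by
  have hab' : a + b ∈ LinearMap.ker φ := by
    rw [LinearMap.mem_ker, map_add, ha, hb, ZModModule.add_self]
  have hac' : a + c ∈ LinearMap.ker φ := by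
    rw [LinearMap.mem_ker, map_add, ha, hc, ZModModule.add_self]
  refine ⟨![⟨a + b, hab'⟩, ⟨a + c, hac'⟩], ?_⟩
  have hprod : (a + b) * (a + c) = a := by
    calc (a + b) * (a + c) = a * a + a * c + a * b + b * c := by ring
      _ = a := by rw [Pi.zmod_two_mul_self, hab, hac, hbc]; simp
  simp [schurAlternating_apply, hprod, ha]

end Schur

theorem Matrix.mem_range_schurAlternating_of_pairwise_disjoint {s n : ℕ}
    (G : Matrix (Fin s) (Fin n) (ZMod 2)) {x : Fin s → ZMod 2}
    (S : Fin 3 → Finset (Fin n)) (hS : Pairwise (Function.onFun Disjoint S))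
    (hsum : ∀ m, ∑ j ∈ S m, G.col j = x) : x ∈ Set.range (schurAlternating G.mulVecLin) :=
  mem_range_schurAlternating_of_mul_eq_zero G.mulVecLin
    (ite_mem_mul_ite_mem_of_disjoint (hS (by decide : (0 : Fin 3) ≠ 1)))
    (ite_mem_mul_ite_mem_of_disjoint (hS (by decide : (0 : Fin 3) ≠ 2)))
    (ite_mem_mul_ite_mem_of_disjoint (hS (by decide : (1 : Fin 3) ≠ 2)))
    ((G.mulVec_ite_mem _).trans (hsum 0)) ((G.mulVec_ite_mem _).trans (hsum 1))
    ((G.mulVec_ite_mem _).trans (hsum 2))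

theorem ceil_sqrt_add_half_le_of_le_choose_two {s r : ℕ} (hs : 1 ≤ s) (h : s ≤ r.choose 2) :
    ⌈Real.sqrt (2 * s + 1 / 4) + 1 / 2⌉ ≤ (r : ℤ) := by
  have hr : (1 : ℝ) ≤ r := by
    exact_mod_cast (show 1 ≤ r by by_contra! h'; interval_cases r; simp at h; omega)
  have h2 : (2 * s : ℝ) ≤ r * (r - 1) := by
    have := (Nat.cast_le (α := ℝ)).2 h
    rw [Nat.cast_choose_two] at this
    linarith
  rw [Int.ceil_le, Int.cast_natCast, ← le_sub_iff_add_le]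
  exact Real.sqrt_le_iff.2 ⟨by linarith, by nlinarith⟩

theorem sqrt_two_mul_le_of_le_choose_two {s r : ℕ} (h : s ≤ r.choose 2) :
    Real.sqrt (2 * s) ≤ r := by
  have := (Nat.cast_le (α := ℝ)).2 h
  rw [Nat.cast_choose_two] at this
  exact Real.sqrt_le_iff.2 ⟨by positivity, by nlinarith [r.cast_nonneg (α := ℝ)]⟩

theorem stmt_17_general (n s : ℕ) (hs : 1 ≤ s)
    (G : Matrix (Fin s) (Fin n) (ZMod 2))
    (hrank : G.rank = s)
    (hP : ∀ i : Fin s, ∃ S : Fin 3 → Finset (Fin n),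
      Pairwise (Function.onFun Disjoint S) ∧
      ∀ m : Fin 3, ∑ j ∈ S m, (fun i' => G i' j) = Pi.single i 1) :
    (s : ℤ) + ⌈Real.sqrt (2 * s + 1 / 4) + 1 / 2⌉ ≤ (n : ℤ) ∧
    (s : ℝ) / n ≤ (s : ℝ) / (s + Real.sqrt (2 * s)) := by
  have hker : finrank (ZMod 2) (LinearMap.ker G.mulVecLin) = n - s := by
    have := G.rank_add_finrank_ker
    rw [hrank, Fintype.card_fin] at this
    omega
  have hspan : span (ZMod 2) (Set.range (schurAlternating G.mulVecLin)) = ⊤ := by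
    refine eq_top_iff.2 ((Pi.basisFun (ZMod 2) (Fin s)).span_eq ▸ span_mono ?_)
    rintro _ ⟨i, rfl⟩
    obtain ⟨S, hS, hsum⟩ := hP i
    rw [Pi.basisFun_apply]
    exact G.mem_range_schurAlternating_of_pairwise_disjoint S hS hsum
  have hchoose : s ≤ (n - s).choose 2 := by
    simpa [hker] using finrank_le_choose_of_span_range_eq_top _ hspan
  have hsn : s ≤ n := hrank ▸ G.rank_le_width
  constructor
  · have := ceil_sqrt_add_half_le_of_le_choose_two hs hchoose
    omega
  · have hpos : (0 : ℝ) < s + Real.sqrt (2 * s) := by positivity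
    refine div_le_div_of_nonneg_left s.cast_nonneg hpos ?_
    have hn : (n : ℝ) = s + (n - s : ℕ) := by rw [← Nat.cast_add, Nat.add_sub_cancel' hsn]
    linarith [sqrt_two_mul_le_of_le_choose_two hchoose]

/-- Every binary 3-server PIR code of dimension `s` has length
`n ≥ s + ⌈√(2s+1/4) + 1/2⌉`; hence its rate is at most `s/(s + √(2s))`. -/
theorem stmt_17 (n s : ℕ) (hs : 1 ≤ s) (C : Submodule (ZMod 2) (Fin n → ZMod 2))
    (hdim : Module.finrank (ZMod 2) C = s)
    (G : Matrix (Fin s) (Fin n) (ZMod 2))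
    (hgen : Submodule.span (ZMod 2) (Set.range G) = C)
    (hrank : G.rank = s)
    (hP : ∀ i : Fin s, ∃ S : Fin 3 → Finset (Fin n),
      Pairwise (Function.onFun Disjoint S) ∧
      ∀ m : Fin 3, ∑ j ∈ S m, (fun i' => G i' j) = Pi.single i 1) :
    (s : ℤ) + ⌈Real.sqrt (2 * s + 1 / 4) + 1 / 2⌉ ≤ (n : ℤ) ∧
    (s : ℝ) / n ≤ (s : ℝ) / (s + Real.sqrt (2 * s)) :=
  stmt_17_general n s hs G hrank hP
end
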